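/- Let X_1, X_2, ..., X_n be independent {0,1}-valued random variables with p_i = E[X_i], and let S_n = X_1 + ... + X_n with E[S_n] = Σ_{i=1}^n p_i = λ. Then D(P_{S_n} ‖ Po(λ)) ≤ Σ_{i=1}^n p_i². -/

import Mathlib

open MeasureTheory ProbabilityTheory Real Filter

/-- The distribution (probability mass function) of a random variable `X`,
as a real-valued function: `distOf μ X a = μ(X = a)`. -/
noncomputable def distOf {Ω α : Type*} [MeasurableSpace Ω] (μ : Measure Ω) (X : Ω → α) (a : α) : ℝ :=
  (μ {ω | X ω = a}).toReal

/-- Relative entropy `D(P‖Q) = ∑ₓ P(x) log (P(x)/Q(x))` (natural logarithm). -/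
noncomputable def relEnt {α : Type*} (P Q : α → ℝ) : ℝ :=
  ∑' x, P x * Real.log (P x / Q x)

/-- Shannon entropy `H(P) = -∑ₓ P(x) log P(x)` (natural logarithm). -/
noncomputable def entH {α : Type*} (P : α → ℝ) : ℝ :=
  -∑' x, P x * Real.log (P x)

/-- The Poisson(l) probability mass function on ℕ. -/
noncomputable def poissonPMF (l : ℝ) (k : ℕ) : ℝ :=
  Real.exp (-l) * l ^ k / (Nat.factorial k)

/-- The scaled score function `ρ_X(x) = (x+1)P(x+1)/(λ P(x)) - 1`. -/
noncomputable def scaledScore (P : ℕ → ℝ) (l : ℝ) (x : ℕ) : ℝ :=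
  ((x + 1 : ℕ) : ℝ) * P (x + 1) / (l * P x) - 1

/-- The scaled Fisher information `K(X) = λ E[ρ_X(X)²]`. -/
noncomputable def scaledFisher (P : ℕ → ℝ) (l : ℝ) : ℝ :=
  l * ∑' x, P x * (scaledScore P l x) ^ 2

/-- Total variation distance `‖P - Q‖_TV = ∑ₓ |P(x) - Q(x)|`. -/
noncomputable def tvDist {α : Type*} (P Q : α → ℝ) : ℝ :=
  ∑' x, |P x - Q x|

/-!
Relative entropy is subadditive under convolution: applying the log-sum inequality on each
antidiagonal `{(i, j) | i + j = s}` gives `D(P₁ ⋆ P₂ ‖ Q₁ ⋆ Q₂) ≤ D(P₁ ‖ Q₁) + D(P₂ ‖ Q₂)`.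
The law of a sum of independent variables is the convolution of their laws, and
`Po(a) ⋆ Po(b) = Po(a + b)`, so induction on the number of summands reduces the theorem to a single
Bernoulli variable, for which `D(Bern(p) ‖ Po(p)) = (1 - p) (log (1 - p) + p) + p² ≤ p²`.
The log-sum inequality needs absolute continuity, so the induction carries it along as well.
-/

open Finset

theorem sum_mul_log_sum_div_sum_le {ι : Type*} (t : Finset ι) {a b : ι → ℝ}
    (ha : ∀ i ∈ t, 0 ≤ a i) (hb : ∀ i ∈ t, 0 ≤ b i) (hab : ∀ i ∈ t, b i = 0 → a i = 0) :
    (∑ i ∈ t, a i) * log ((∑ i ∈ t, a i) / ∑ i ∈ t, b i) ≤ ∑ i ∈ t, a i * log (a i / b i) := by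
  set B := ∑ i ∈ t, b i
  rcases (sum_nonneg hb).eq_or_lt with hB | hB
  · have ha0 : ∀ i ∈ t, a i = 0 := fun i hi =>
      hab i hi ((sum_eq_zero_iff_of_nonneg hb).1 hB.symm i hi)
    rw [sum_eq_zero ha0, sum_eq_zero fun i hi => by rw [ha0 i hi, zero_mul], zero_mul]
  -- Jensen for `x ↦ x log x` at the points `a i / b i` with weights `b i / B`
  have hmean : ∀ i ∈ t, b i / B * (a i / b i) = a i / B := fun i hi => by
    rcases (hb i hi).eq_or_lt with h | h
    · simp [← h, hab i hi h.symm]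
    · field_simp
  have hjensen := convexOn_mul_log.map_sum_le (t := t) (w := fun i => b i / B)
    (p := fun i => a i / b i) (fun i hi => div_nonneg (hb i hi) hB.le)
    (by rw [← sum_div, div_self hB.ne'])
    (fun i hi => Set.mem_Ici.2 (div_nonneg (ha i hi) (hb i hi)))
  simp only [smul_eq_mul] at hjensen
  rw [sum_congr rfl hmean, ← sum_div] at hjensen
  calc (∑ i ∈ t, a i) * log ((∑ i ∈ t, a i) / B)
      = B * ((∑ i ∈ t, a i) / B * log ((∑ i ∈ t, a i) / B)) := by
        rw [← mul_assoc, mul_div_cancel₀ _ hB.ne']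
    _ ≤ B * ∑ i ∈ t, b i / B * (a i / b i * log (a i / b i)) := by gcongr
    _ = ∑ i ∈ t, a i * log (a i / b i) := by
      rw [mul_sum]
      refine sum_congr rfl fun i hi => ?_
      rw [← mul_assoc, ← mul_assoc, mul_assoc B, hmean i hi, mul_div_cancel₀ _ hB.ne']

lemma mul_mul_log_mul_div_mul {a b c d : ℝ} (hab : b = 0 → a = 0) (hcd : d = 0 → c = 0) :
    a * c * log (a * c / (b * d)) = a * log (a / b) * c + a * (c * log (c / d)) := by
  rcases eq_or_ne a 0 with rfl | ha
  · simp
  rcases eq_or_ne c 0 with rfl | hc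
  · simp
  rw [mul_div_mul_comm, log_mul (div_ne_zero ha (mt hab ha)) (div_ne_zero hc (mt hcd hc))]
  ring

lemma relEnt_eq_sum_range {P Q : ℕ → ℝ} {m : ℕ} (hP : ∀ k, m ≤ k → P k = 0) :
    relEnt P Q = ∑ k ∈ range m, P k * log (P k / Q k) :=
  tsum_eq_sum fun k hk => by rw [hP k (by simpa using hk), zero_mul]

def natConv (f g : ℕ → ℝ) (s : ℕ) : ℝ :=
  ∑ x ∈ antidiagonal s, f x.1 * g x.2

lemma natConv_eq_zero_of_le {f g : ℕ → ℝ} {m₁ m₂ : ℕ} (hf : ∀ k, m₁ ≤ k → f k = 0)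
    (hg : ∀ k, m₂ ≤ k → g k = 0) {s : ℕ} (hs : m₁ + m₂ ≤ s) : natConv f g s = 0 :=
  sum_eq_zero fun x hx => by
    rw [HasAntidiagonal.mem_antidiagonal] at hx
    rcases le_or_gt m₁ x.1 with h | h
    · rw [hf _ h, zero_mul]
    · rw [hg _ (by omega), mul_zero]

lemma sum_range_natConv {f g : ℕ → ℝ} {m₁ m₂ : ℕ} (hf : ∀ k, m₁ ≤ k → f k = 0)
    (hg : ∀ k, m₂ ≤ k → g k = 0) :
    ∑ s ∈ range (m₁ + m₂), natConv f g s = (∑ k ∈ range m₁, f k) * ∑ k ∈ range m₂, g k := by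
  have hsupp {h : ℕ → ℝ} {m : ℕ} (hh : ∀ k, m ≤ k → h k = 0) : ∀ k ∉ range m, h k = 0 :=
    fun k hk => hh k (by simpa using hk)
  have hprod := (summable_of_ne_finset_zero (hsupp hf)).tsum_mul_tsum_eq_tsum_sum_antidiagonal
    (summable_of_ne_finset_zero (hsupp hg))
    (summable_of_ne_finset_zero (s := range m₁ ×ˢ range m₂) fun x hx => ?_)
  · change _ = ∑' s, natConv f g s at hprod
    rwa [tsum_eq_sum (hsupp hf), tsum_eq_sum (hsupp hg),
      tsum_eq_sum (hsupp fun s => natConv_eq_zero_of_le hf hg), eq_comm] at hprod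
  rw [mem_product, not_and_or] at hx
  rcases hx with h | h
  · rw [hsupp hf _ h, zero_mul]
  · rw [hsupp hg _ h, mul_zero]

lemma natConv_eq_zero_of_natConv_eq_zero {P₁ P₂ Q₁ Q₂ : ℕ → ℝ} (hQ₁ : ∀ k, 0 ≤ Q₁ k)
    (hQ₂ : ∀ k, 0 ≤ Q₂ k) (h₁ : ∀ k, Q₁ k = 0 → P₁ k = 0) (h₂ : ∀ k, Q₂ k = 0 → P₂ k = 0)
    {s : ℕ} (hs : natConv Q₁ Q₂ s = 0) : natConv P₁ P₂ s = 0 := by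
  refine sum_eq_zero fun x hx => ?_
  rcases mul_eq_zero.1 ((sum_eq_zero_iff_of_nonneg fun y _ => mul_nonneg (hQ₁ _) (hQ₂ _)).1 hs x hx)
    with h | h
  · rw [h₁ _ h, zero_mul]
  · rw [h₂ _ h, mul_zero]

structure IsProbVec (P : ℕ → ℝ) (m : ℕ) : Prop where
  nonneg : ∀ k, 0 ≤ P k
  eq_zero_of_le : ∀ k, m ≤ k → P k = 0
  sum_range : ∑ k ∈ range m, P k = 1

theorem relEnt_natConv_le {P₁ P₂ Q₁ Q₂ : ℕ → ℝ} {m₁ m₂ : ℕ} (hP₁ : IsProbVec P₁ m₁)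
    (hP₂ : IsProbVec P₂ m₂) (hQ₁ : ∀ k, 0 ≤ Q₁ k) (hQ₂ : ∀ k, 0 ≤ Q₂ k)
    (h₁ : ∀ k, Q₁ k = 0 → P₁ k = 0) (h₂ : ∀ k, Q₂ k = 0 → P₂ k = 0) :
    relEnt (natConv P₁ P₂) (natConv Q₁ Q₂) ≤ relEnt P₁ Q₁ + relEnt P₂ Q₂ := by
  set D₁ : ℕ → ℝ := fun k => P₁ k * log (P₁ k / Q₁ k)
  set D₂ : ℕ → ℝ := fun k => P₂ k * log (P₂ k / Q₂ k)
  have hD₁ : ∀ k, m₁ ≤ k → D₁ k = 0 := fun k hk => by simp [D₁, hP₁.eq_zero_of_le k hk]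
  have hD₂ : ∀ k, m₂ ≤ k → D₂ k = 0 := fun k hk => by simp [D₂, hP₂.eq_zero_of_le k hk]
  rw [relEnt_eq_sum_range fun s => natConv_eq_zero_of_le hP₁.eq_zero_of_le hP₂.eq_zero_of_le,
    relEnt_eq_sum_range hP₁.eq_zero_of_le, relEnt_eq_sum_range hP₂.eq_zero_of_le]
  calc ∑ s ∈ range (m₁ + m₂), natConv P₁ P₂ s * log (natConv P₁ P₂ s / natConv Q₁ Q₂ s)
      ≤ ∑ s ∈ range (m₁ + m₂), ∑ x ∈ antidiagonal s,
          P₁ x.1 * P₂ x.2 * log (P₁ x.1 * P₂ x.2 / (Q₁ x.1 * Q₂ x.2)) := by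
        gcongr with s
        exact sum_mul_log_sum_div_sum_le _ (fun x _ => mul_nonneg (hP₁.nonneg _) (hP₂.nonneg _))
          (fun x _ => mul_nonneg (hQ₁ _) (hQ₂ _)) fun x _ hx => by
            rcases mul_eq_zero.1 hx with h | h
            · rw [h₁ _ h, zero_mul]
            · rw [h₂ _ h, mul_zero]
    _ = ∑ s ∈ range (m₁ + m₂), (natConv D₁ P₂ s + natConv P₁ D₂ s) := by
        refine sum_congr rfl fun s _ => ?_
        simp only [natConv, ← sum_add_distrib, D₁, D₂]
        exact sum_congr rfl fun x _ => mul_mul_log_mul_div_mul (h₁ _) (h₂ _)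
    _ = (∑ k ∈ range m₁, D₁ k) + ∑ k ∈ range m₂, D₂ k := by
        rw [sum_add_distrib, sum_range_natConv hD₁ hP₂.eq_zero_of_le,
          sum_range_natConv hP₁.eq_zero_of_le hD₂, hP₁.sum_range, hP₂.sum_range, mul_one, one_mul]

lemma poissonPMF_nonneg {l : ℝ} (hl : 0 ≤ l) (k : ℕ) : 0 ≤ poissonPMF l k := by
  unfold _root_.poissonPMF
  positivity

lemma natConv_poissonPMF (a b : ℝ) :
    natConv (poissonPMF a) (poissonPMF b) = poissonPMF (a + b) := by
  funext s
  simp only [natConv, _root_.poissonPMF, (Commute.all a b).add_pow', mul_sum, sum_div]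
  refine sum_congr rfl fun x hx => ?_
  rw [HasAntidiagonal.mem_antidiagonal] at hx
  subst hx
  have hchoose : ((x.1 + x.2).choose x.2 : ℝ) ≠ 0 :=
    Nat.cast_ne_zero.2 (Nat.choose_pos (Nat.le_add_left _ _)).ne'
  rw [nsmul_eq_mul, Nat.choose_symm_add, ← Nat.add_choose_mul_factorial_mul_factorial, neg_add,
    exp_add]
  push_cast
  field_simp

def bernoulliPMF (p : ℝ) (k : ℕ) : ℝ :=
  if k = 0 then 1 - p else if k = 1 then p else 0

lemma isProbVec_bernoulliPMF {p : ℝ} (hp₀ : 0 ≤ p) (hp₁ : p ≤ 1) :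
    IsProbVec (bernoulliPMF p) 2 where
  nonneg k := by unfold bernoulliPMF; split_ifs <;> linarith
  eq_zero_of_le k hk := by unfold bernoulliPMF; rw [if_neg (by omega), if_neg (by omega)]
  sum_range := by simp [sum_range_succ, bernoulliPMF]

lemma bernoulliPMF_eq_zero_of_poissonPMF_eq_zero {p : ℝ} {k : ℕ} (h : poissonPMF p k = 0) :
    bernoulliPMF p k = 0 := by
  match k with
  | 0 => simp [_root_.poissonPMF, exp_ne_zero] at h
  | 1 => simpa [_root_.poissonPMF, exp_ne_zero, bernoulliPMF] using h
  | k + 2 => simp [bernoulliPMF]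

lemma relEnt_bernoulliPMF_poissonPMF_le {p : ℝ} (hp₀ : 0 ≤ p) (hp₁ : p ≤ 1) :
    relEnt (bernoulliPMF p) (poissonPMF p) ≤ p ^ 2 := by
  rw [relEnt_eq_sum_range (isProbVec_bernoulliPMF hp₀ hp₁).eq_zero_of_le]
  simp only [sum_range_succ, sum_range_zero, zero_add, bernoulliPMF, _root_.poissonPMF,
    ↓reduceIte, one_ne_zero, pow_zero, pow_one, Nat.factorial_zero, Nat.factorial_one, Nat.cast_one,
    mul_one, div_one]
  have h₀ : (1 - p) * log ((1 - p) / exp (-p)) ≤ 0 := by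
    rcases hp₁.eq_or_lt with rfl | hp₁
    · simp
    have hq : 0 < 1 - p := sub_pos.2 hp₁
    rw [log_div hq.ne' (exp_ne_zero _), log_exp]
    exact mul_nonpos_of_nonneg_of_nonpos hq.le (by linarith [log_le_sub_one_of_pos hq])
  have h₁ : p * log (p / (exp (-p) * p)) = p ^ 2 := by
    rcases hp₀.eq_or_lt with rfl | hp₀
    · simp
    rw [div_mul_cancel_right₀ hp₀.ne', ← exp_neg, neg_neg, log_exp, sq]
  linarith

section

variable {Ω : Type*} [MeasurableSpace Ω] {μ : Measure Ω}

lemma distOf_add_eq_natConv [IsFiniteMeasure μ] {A B : Ω → ℕ} (hA : Measurable A)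
    (hB : Measurable B) (hAB : IndepFun A B μ) :
    distOf μ (fun ω => A ω + B ω) = natConv (distOf μ A) (distOf μ B) := by
  funext s
  have hfiber : {ω | A ω + B ω = s} = (fun ω => (A ω, B ω)) ⁻¹' ↑(antidiagonal s) := by
    ext ω
    simp
  simp only [distOf, ← measureReal_def, natConv, hfiber]
  rw [← sum_measureReal_preimage_singleton _ fun x _ => (hA.prodMk hB) (measurableSet_singleton x)]
  refine sum_congr rfl fun x _ => ?_
  have hpre : (fun ω => (A ω, B ω)) ⁻¹' {x} = A ⁻¹' {x.1} ∩ B ⁻¹' {x.2} := by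
    ext ω
    simp [Prod.ext_iff]
  rw [hpre, measureReal_def, hAB.measure_inter_preimage_eq_mul _ _ (measurableSet_singleton _)
    (measurableSet_singleton _), ENNReal.toReal_mul]
  rfl

lemma integral_natCast_eq_measureReal_of_le_one {Y : Ω → ℕ} (hY : Measurable Y)
    (hb : ∀ ω, Y ω ≤ 1) :
    ∫ ω, (Y ω : ℝ) ∂μ = μ.real {ω | Y ω = 1} := by
  have hind : (fun ω => (Y ω : ℝ)) = {ω | Y ω = 1}.indicator 1 := by
    funext ω
    rcases Nat.le_one_iff_eq_zero_or_eq_one.1 (hb ω) with h | h <;> simp [h]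
  rw [hind, integral_indicator_one (measurableSet_eq_fun hY measurable_const)]

lemma distOf_eq_bernoulliPMF [IsProbabilityMeasure μ] {Y : Ω → ℕ} (hY : Measurable Y)
    (hb : ∀ ω, Y ω ≤ 1) : distOf μ Y = bernoulliPMF (μ.real {ω | Y ω = 1}) := by
  funext k
  simp only [distOf, ← measureReal_def, bernoulliPMF]
  match k with
  | 0 =>
    have : {ω | Y ω = 0} = {ω | Y ω = 1}ᶜ := by
      ext ω
      have := hb ω
      simp only [Set.mem_ofPred_eq, Set.mem_compl_iff]
      omega
    rw [this, probReal_compl_eq_one_sub (measurableSet_eq_fun hY measurable_const)]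
    rfl
  | 1 => rfl
  | k + 2 =>
    have : {ω | Y ω = k + 2} = ∅ := Set.eq_empty_of_forall_notMem fun ω h => by
      have := hb ω
      simp only [Set.mem_ofPred_eq] at h
      omega
    simp [this]

lemma isProbVec_distOf [IsProbabilityMeasure μ] {Y : Ω → ℕ} (hY : Measurable Y) {m : ℕ}
    (hm : ∀ ω, Y ω < m) : IsProbVec (distOf μ Y) m where
  nonneg _ := ENNReal.toReal_nonneg
  eq_zero_of_le k hk := by
    have : {ω | Y ω = k} = ∅ := Set.eq_empty_of_forall_notMem fun ω h => by
      have := hm ω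
      simp only [Set.mem_ofPred_eq] at h
      omega
    simp [distOf, this]
  sum_range := by
    change ∑ k ∈ range m, μ.real (Y ⁻¹' {k}) = 1
    rw [sum_measureReal_preimage_singleton _ fun k _ => hY (measurableSet_singleton k)]
    convert probReal_univ (μ := μ)
    ext ω
    simpa using hm ω

theorem relEnt_distOf_sum_le [IsProbabilityMeasure μ] {ι : Type*} {X : ι → Ω → ℕ}
    (hmeas : ∀ i, Measurable (X i)) (hbin : ∀ i ω, X i ω ≤ 1) (hindep : iIndepFun X μ)
    {p : ι → ℝ} (hp : ∀ i, ∫ ω, (X i ω : ℝ) ∂μ = p i) (s : Finset ι) :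
    (∀ k, poissonPMF (∑ i ∈ s, p i) k = 0 → distOf μ (fun ω => ∑ i ∈ s, X i ω) k = 0) ∧
      relEnt (distOf μ (fun ω => ∑ i ∈ s, X i ω)) (poissonPMF (∑ i ∈ s, p i)) ≤
        ∑ i ∈ s, p i ^ 2 := by
  classical
  have hp_eq i : p i = μ.real {ω | X i ω = 1} :=
    (hp i).symm.trans (integral_natCast_eq_measureReal_of_le_one (hmeas i) (hbin i))
  have hp₀ i : 0 ≤ p i := hp_eq i ▸ measureReal_nonneg
  have hp₁ i : p i ≤ 1 := hp_eq i ▸ measureReal_le_one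
  have hdist i : distOf μ (X i) = bernoulliPMF (p i) :=
    hp_eq i ▸ distOf_eq_bernoulliPMF (hmeas i) (hbin i)
  induction s using Finset.induction_on with
  | empty =>
    have h0 : distOf μ (fun _ => 0) = bernoulliPMF 0 := by
      simpa using distOf_eq_bernoulliPMF (μ := μ) measurable_const fun _ => zero_le_one
    simp only [sum_empty, h0]
    exact ⟨fun k => bernoulliPMF_eq_zero_of_poissonPMF_eq_zero,
      by simpa using relEnt_bernoulliPMF_poissonPMF_le le_rfl zero_le_one⟩
  | insert j s hj ih =>
    obtain ⟨hac, hle⟩ := ih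
    have hS : Measurable fun ω => ∑ i ∈ s, X i ω := Finset.measurable_sum s fun i _ => hmeas i
    have hindep_j : IndepFun (X j) (fun ω => ∑ i ∈ s, X i ω) μ := by
      simpa only [Finset.sum_fn] using (hindep.indepFun_finsetSum_of_notMem hmeas hj).symm
    have hS_lt ω : ∑ i ∈ s, X i ω < #s + 1 := by
      have := (sum_le_sum fun i _ => hbin i ω).trans_eq (by simp : ∑ i ∈ s, 1 = #s)
      omega
    simp_rw [sum_insert hj]
    rw [distOf_add_eq_natConv (hmeas j) hS hindep_j, hdist j, ← natConv_poissonPMF]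
    have hQ₁ := poissonPMF_nonneg (hp₀ j)
    have hQ₂ := poissonPMF_nonneg (sum_nonneg (s := s) fun i _ => hp₀ i)
    refine ⟨fun k => natConv_eq_zero_of_natConv_eq_zero hQ₁ hQ₂
      (fun k => bernoulliPMF_eq_zero_of_poissonPMF_eq_zero) hac, ?_⟩
    calc _ ≤ relEnt (bernoulliPMF (p j)) (poissonPMF (p j)) +
          relEnt (distOf μ fun ω => ∑ i ∈ s, X i ω) (poissonPMF (∑ i ∈ s, p i)) :=
          relEnt_natConv_le (isProbVec_bernoulliPMF (hp₀ j) (hp₁ j)) (isProbVec_distOf hS hS_lt)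
            hQ₁ hQ₂ (fun k => bernoulliPMF_eq_zero_of_poissonPMF_eq_zero) hac
      _ ≤ p j ^ 2 + ∑ i ∈ s, p i ^ 2 :=
          add_le_add (relEnt_bernoulliPMF_poissonPMF_le (hp₀ j) (hp₁ j)) hle

end

/-- Inequality (3): if the binary random variables `Xᵢ` are independent, then
`D(P_{S_n} ‖ Po(λ)) ≤ ∑ᵢ pᵢ²`. -/
theorem poisson_approx_relEnt_indep {Ω : Type*} [MeasurableSpace Ω]
    (μ : Measure Ω) [IsProbabilityMeasure μ]
    (n : ℕ) (X : Fin n → Ω → ℕ)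
    (hmeas : ∀ i, Measurable (X i))
    (hbin : ∀ i ω, X i ω ≤ 1)
    (hindep : iIndepFun X μ)
    (p : Fin n → ℝ) (hp : ∀ i, ∫ ω, (X i ω : ℝ) ∂μ = p i)
    (lam : ℝ) (hlam : ∑ i, p i = lam) :
    relEnt (distOf μ (fun ω => ∑ i, X i ω)) (poissonPMF lam) ≤ ∑ i, (p i) ^ 2 := by
  subst hlam
  exact (relEnt_distOf_sum_le hmeas hbin hindep hp Finset.univ).2
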